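/- arXiv:1803.00481 — 2 statements merged into one kernel-verified Lean document; each statement's English description precedes it below -/
import Mathlib

section
/- Under the standing assumptions, suppose there exist a maximal-weight initial walk from i to 1 on 𝒯_{Γ(k)} of length l₁ and a maximal-weight final walk from 1 to j on 𝒯_{Γ(k)} of length l₂ with k ≥ l₁ + l₂. Then there exists a full walk from i to j on 𝒯_{Γ(k)} of weight exactly w_i* + v_j* (obtained by joining the two walks with loop arcs at node 1); consequently Γ(k)_{i,j} ≥ w_i* + v_j*. -/
/-
Common framework for "A bound for the rank-one transient of inhomogeneous matrix
products in special case" (Kennedy-Cochran-Patrick, Sergeev, Berežný).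

We work over the max-plus semiring, modelled inside `EReal` (so `⊥ = -∞` is the
max-plus zero and ordinary addition is the max-plus multiplication).  Matrices are
functions `Fin m → Fin m → EReal`.  The distinguished node "1" of the paper is the
node `0 : Fin (n+2)` (so that `n + 2 ≥ 2` plays the role of the paper's `n ≥ 2`).

A walk is a nonempty list of nodes.  Walks on the trellis digraph of the product
`A 1 ⊗ ⋯ ⊗ A k` additionally record the level at which they start: the arc from the
`(l-1)`-st to the `l`-th node of a walk starting at level `s` has weight given by the
matrix `A (s + l)`.
-/

open scoped Classical

noncomputable section

namespace MaxPlusTransient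

variable {m : ℕ}

/-- Weight of a walk on the trellis digraph, starting at level `s`. -/
def tw (M : ℕ → Fin m → Fin m → EReal) : ℕ → List (Fin m) → EReal
  | _, [] => 0
  | _, [_] => 0
  | s, a :: b :: t => M (s + 1) a b + tw M (s + 1) (b :: t)

/-- Being a walk on the trellis digraph, starting at level `s` (all traversed arcs exist,
i.e. have weight `≠ -∞`); a walk is a nonempty list of nodes. -/
def twalk (M : ℕ → Fin m → Fin m → EReal) : ℕ → List (Fin m) → Prop
  | _, [] => False
  | _, [_] => True
  | s, a :: b :: t => M (s + 1) a b ≠ ⊥ ∧ twalk M (s + 1) (b :: t)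

/-- Weight of a walk on the digraph `D_A` of a single matrix `A`. -/
def wWeight (A : Fin m → Fin m → EReal) (W : List (Fin m)) : EReal :=
  tw (fun _ => A) 0 W

/-- Being a walk on the digraph `D_A` of a matrix `A`. -/
def isWalk (A : Fin m → Fin m → EReal) (W : List (Fin m)) : Prop :=
  twalk (fun _ => A) 0 W

/-- A path is a walk with no repeated nodes. -/
def isPath (A : Fin m → Fin m → EReal) (W : List (Fin m)) : Prop :=
  isWalk A W ∧ W.Nodup

/-- A cycle is a walk of length (number of arcs) at least one whose first and last
nodes coincide. -/
def isCycle (A : Fin m → Fin m → EReal) (W : List (Fin m)) : Prop :=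
  isWalk A W ∧ 2 ≤ W.length ∧ W.head? = W.getLast?

/-- A matrix is irreducible iff its digraph is strongly connected. -/
def irreducible (A : Fin m → Fin m → EReal) : Prop :=
  ∀ i j : Fin m, ∃ W, isWalk A W ∧ W.head? = some i ∧ W.getLast? = some j

/-- Geometric equivalence: the digraphs have the same arcs. -/
def geomEq (A B : Fin m → Fin m → EReal) : Prop :=
  ∀ i j, A i j = ⊥ ↔ B i j = ⊥

/-- Max-plus matrix product. -/
def mp (A B : Fin m → Fin m → EReal) : Fin m → Fin m → EReal :=
  fun i j => ⨆ s, A i s + B s j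

/-- `Gamma M k = M 1 ⊗ M 2 ⊗ ⋯ ⊗ M k` (max-plus product), with `Gamma M 0` the
max-plus identity matrix. -/
def Gamma (M : ℕ → Fin m → Fin m → EReal) : ℕ → Fin m → Fin m → EReal
  | 0 => fun i j => if i = j then 0 else ⊥
  | k + 1 => mp (Gamma M k) (M (k + 1))

/-- An initial walk from `i` to `one` on the trellis digraph of `M 1 ⊗ ⋯ ⊗ M k`:
it starts at node `i` at level `0`, ends at node `one` at some level `≤ k`, and the
only node of the walk equal to `one` is its final node. -/
def isInitialWalk (M : ℕ → Fin m → Fin m → EReal) (one : Fin m) (k : ℕ) (i : Fin m)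
    (W : List (Fin m)) : Prop :=
  twalk M 0 W ∧ W.length - 1 ≤ k ∧ W.head? = some i ∧ W.getLast? = some one ∧
    ∀ v ∈ W.dropLast, v ≠ one

/-- A final walk from `one` to `j` on the trellis digraph of `M 1 ⊗ ⋯ ⊗ M k`:
it starts at node `one` at some level `s`, ends at node `j` at level `k`, and the
only node of the walk equal to `one` is its first node. -/
def isFinalWalk (M : ℕ → Fin m → Fin m → EReal) (one : Fin m) (k : ℕ) (j : Fin m) (s : ℕ)
    (W : List (Fin m)) : Prop :=
  twalk M s W ∧ s + (W.length - 1) = k ∧ W.head? = some one ∧ W.getLast? = some j ∧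
    ∀ v ∈ W.tail, v ≠ one

/-- A full walk from `i` to `j` on the trellis digraph of `M 1 ⊗ ⋯ ⊗ M k`: it goes
from node `i` at level `0` to node `j` at level `k`. -/
def isFullWalk (M : ℕ → Fin m → Fin m → EReal) (k : ℕ) (i j : Fin m)
    (W : List (Fin m)) : Prop :=
  twalk M 0 W ∧ W.length = k + 1 ∧ W.head? = some i ∧ W.getLast? = some j

/-- `w_i*`: maximal weight of an initial walk from `i` to `one`. -/
def wStar (M : ℕ → Fin m → Fin m → EReal) (one : Fin m) (k : ℕ) (i : Fin m) : EReal :=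
  sSup {x : EReal | ∃ W, isInitialWalk M one k i W ∧ x = tw M 0 W}

/-- `v_j*`: maximal weight of a final walk from `one` to `j`. -/
def vStar (M : ℕ → Fin m → Fin m → EReal) (one : Fin m) (k : ℕ) (j : Fin m) : EReal :=
  sSup {x : EReal | ∃ s W, isFinalWalk M one k j s W ∧ x = tw M s W}

/-- `α_i`: maximal weight of a path on `D_A` from `i` to `one`. -/
def alphaE (A : Fin m → Fin m → EReal) (one : Fin m) (i : Fin m) : EReal :=
  sSup {x : EReal | ∃ W, isPath A W ∧ W.head? = some i ∧ W.getLast? = some one ∧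
    x = wWeight A W}

/-- `β_j`: maximal weight of a path on `D_A` from `one` to `j`. -/
def betaE (A : Fin m → Fin m → EReal) (one : Fin m) (j : Fin m) : EReal :=
  sSup {x : EReal | ∃ W, isPath A W ∧ W.head? = some one ∧ W.getLast? = some j ∧
    x = wWeight A W}

/-- `γ_{i,j}`: maximal weight of a path on `D_A` from `i` to `j` not passing through
`one` (`-∞` if no such path exists). -/
def gammaE (A : Fin m → Fin m → EReal) (one : Fin m) (i j : Fin m) : EReal :=
  sSup {x : EReal | ∃ W, isPath A W ∧ W.head? = some i ∧ W.getLast? = some j ∧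
    (∀ v ∈ W, v ≠ one) ∧ x = wWeight A W}

/-- The set of mean weights of cycles of `D_A` avoiding the node `one`. -/
def lamSet (A : Fin m → Fin m → EReal) (one : Fin m) : Set ℝ :=
  {x : ℝ | ∃ W, isCycle A W ∧ (∀ v ∈ W, v ≠ one) ∧
    ∃ r : ℝ, wWeight A W = (r : EReal) ∧ x = r / ((W.length : ℝ) - 1)}

/-- `λ*`: the supremum of the mean weights of cycles of `D_A` avoiding `one`. -/
def lamStar (A : Fin m → Fin m → EReal) (one : Fin m) : ℝ :=
  sSup (lamSet A one)

/-- `w_i`: maximal weight of a walk of length at most `k` from `i` to `one` on `D_A`. -/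
def wInf (A : Fin m → Fin m → EReal) (one : Fin m) (k : ℕ) (i : Fin m) : EReal :=
  sSup {x : EReal | ∃ W, isWalk A W ∧ W.length - 1 ≤ k ∧ W.head? = some i ∧
    W.getLast? = some one ∧ x = wWeight A W}

/-- `v_j`: maximal weight of a walk of length at most `k` from `one` to `j` on `D_A`. -/
def vInf (A : Fin m → Fin m → EReal) (one : Fin m) (k : ℕ) (j : Fin m) : EReal :=
  sSup {x : EReal | ∃ W, isWalk A W ∧ W.length - 1 ≤ k ∧ W.head? = some one ∧
    W.getLast? = some j ∧ x = wWeight A W}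

/-- The standing assumptions of the paper on the set `𝒳` and its entrywise boundaries
`Asup` (supremum) and `Ainf` (infimum):
matrices of `𝒳` have no `+∞` entries, `Asup`/`Ainf` are the entrywise sup/inf,
`Asup` has no `+∞` entries and `Ainf` has no `-∞` entries where matrices of `𝒳` are
finite; all matrices of `𝒳` and also `Ainf` are irreducible and pairwise geometrically
equivalent; every matrix of `𝒳` and also `Asup` has `(one, one)` entry `0` and all its
cycles other than (repetitions of) the loop at `one` have strictly negative (mean)
weight. -/
def Standing (𝒳 : Set (Fin m → Fin m → EReal)) (Asup Ainf : Fin m → Fin m → EReal)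
    (one : Fin m) : Prop :=
  𝒳.Nonempty ∧
  (∀ X ∈ 𝒳, ∀ i j, X i j ≠ ⊤) ∧
  (∀ i j, Asup i j = ⨆ X ∈ 𝒳, X i j) ∧
  (∀ i j, Ainf i j = ⨅ X ∈ 𝒳, X i j) ∧
  (∀ i j, Asup i j ≠ ⊤) ∧
  (∀ X ∈ 𝒳, ∀ i j, X i j ≠ ⊥ → Ainf i j ≠ ⊥) ∧
  (∀ X ∈ 𝒳, irreducible X) ∧
  irreducible Ainf ∧
  (∀ X ∈ 𝒳, geomEq X Ainf) ∧
  (∀ X ∈ 𝒳, X one one = 0) ∧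
  (∀ X ∈ 𝒳, ∀ W, isCycle X W → (∃ v ∈ W, v ≠ one) → wWeight X W < 0) ∧
  Asup one one = 0 ∧
  (∀ W, isCycle Asup W → (∃ v ∈ W, v ≠ one) → wWeight Asup W < 0)


/-! ### Auxiliary lemmas -/

lemma tw_single (M : ℕ → Fin m → Fin m → EReal) (s : ℕ) (a : Fin m) :
    tw M s [a] = 0 := rfl

lemma tw_cons_cons (M : ℕ → Fin m → Fin m → EReal) (s : ℕ) (a b : Fin m)
    (t : List (Fin m)) :
    tw M s (a :: b :: t) = M (s+1) a b + tw M (s+1) (b :: t) := rfl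

lemma twalk_single (M : ℕ → Fin m → Fin m → EReal) (s : ℕ) (a : Fin m) :
    twalk M s [a] := trivial

lemma twalk_cons_cons (M : ℕ → Fin m → Fin m → EReal) (s : ℕ) (a b : Fin m)
    (t : List (Fin m)) :
    twalk M s (a :: b :: t) ↔ M (s+1) a b ≠ ⊥ ∧ twalk M (s+1) (b :: t) := Iff.rfl

lemma tw_append_cons (M : ℕ → Fin m → Fin m → EReal) (a : Fin m) (L' : List (Fin m)) :
    ∀ (L : List (Fin m)) (s : ℕ),
      tw M s (L ++ a :: L') = tw M s (L ++ [a]) + tw M (s + L.length) (a :: L') := by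
  intro L
  induction L with
  | nil => intro t; simp [tw_single]
  | cons x L ih =>
    intro t
    cases L with
    | nil => simp [tw_cons_cons, tw_single, add_assoc]
    | cons y L =>
      have h := ih (t + 1)
      simp only [List.cons_append, List.length_cons] at h ⊢
      have hlev : t + (L.length + 1 + 1) = t + 1 + (L.length + 1) := by omega
      rw [tw_cons_cons, tw_cons_cons, hlev, h, ← add_assoc]

lemma twalk_append_cons (M : ℕ → Fin m → Fin m → EReal) (a : Fin m) (L' : List (Fin m)) :
    ∀ (L : List (Fin m)) (s : ℕ),
      twalk M s (L ++ a :: L') ↔ twalk M s (L ++ [a]) ∧ twalk M (s + L.length) (a :: L') := by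
  intro L
  induction L with
  | nil => intro t; simp [twalk_single]
  | cons x L ih =>
    intro t
    cases L with
    | nil =>
      simp only [List.nil_append, List.cons_append, List.length_cons, List.length_nil]
      rw [twalk_cons_cons, twalk_cons_cons]
      simp only [twalk_single, and_true, Nat.zero_add]
    | cons y L =>
      have h := ih (t + 1)
      simp only [List.cons_append, List.length_cons] at h ⊢
      rw [twalk_cons_cons, twalk_cons_cons, h]
      have hlev : t + 1 + (L.length + 1) = t + (L.length + 1 + 1) := by omega
      rw [hlev, and_assoc]

lemma tw_twalk_replicate (M : ℕ → Fin m → Fin m → EReal) (z : Fin m) :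
    ∀ (c t : ℕ), (∀ l, t < l → l ≤ t + c → M l z z = 0) →
      tw M t (List.replicate (c+1) z) = 0 ∧ twalk M t (List.replicate (c+1) z) := by
  intro c
  induction c with
  | zero => intro t _; exact ⟨rfl, trivial⟩
  | succ c ih =>
    intro t h
    have h1 : M (t+1) z z = 0 := h (t+1) (by omega) (by omega)
    have h2 := ih (t+1) (fun l hl hl' => h l (by omega) (by omega))
    have hrw : List.replicate (c+1+1) z = z :: List.replicate (c+1) z := rfl
    have hrw2 : List.replicate (c+1) z = z :: List.replicate c z := rfl
    rw [hrw]
    constructor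
    · rw [hrw2, tw_cons_cons, ← hrw2, h1, h2.1, add_zero]
    · rw [hrw2, twalk_cons_cons, ← hrw2, h1]
      exact ⟨EReal.zero_ne_bot, h2.2⟩

lemma tw_le_Gamma (M : ℕ → Fin m → Fin m → EReal) :
    ∀ (k : ℕ) (W : List (Fin m)) (i j : Fin m), W.length = k + 1 →
      W.head? = some i → W.getLast? = some j → tw M 0 W ≤ Gamma M k i j := by
  intro k
  induction k with
  | zero =>
    intro W i j hlen hh hl
    match W, hlen with
    | [a], _ =>
      have hi : a = i := by simpa using hh
      have hj : a = j := by simpa using hl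
      subst hi; subst hj
      simp [tw_single, Gamma]
  | succ k ih =>
    intro W i j hlen hh hl
    have hne : W ≠ [] := fun h => by rw [h] at hlen; simp at hlen
    have hlen' : W.dropLast.length = k + 1 := by rw [List.length_dropLast]; omega
    have hne' : W.dropLast ≠ [] := fun h => by rw [h] at hlen'; simp at hlen'
    obtain ⟨P, x, hPx⟩ : ∃ P x, W.dropLast = P ++ [x] :=
      ⟨_, _, (List.dropLast_append_getLast hne').symm⟩
    have hPlen : P.length = k := by
      have := congrArg List.length hPx
      simp only [List.length_append, List.length_singleton] at this
      omega
    have hdj : W.dropLast ++ [j] = W := by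
      have h2 : W.getLast hne = j := by
        rw [List.getLast?_eq_getLast hne] at hl
        exact Option.some_injective _ hl
      rw [← h2]
      exact List.dropLast_append_getLast hne
    have hWsplit : W = P ++ x :: [j] := by
      rw [← hdj, hPx]; simp
    have hheadW' : W.dropLast.head? = some i := by
      rw [← hdj, List.head?_append_of_ne_nil _ hne'] at hh
      exact hh
    have hlastW' : W.dropLast.getLast? = some x := by
      rw [hPx]; simp
    have hih := ih W.dropLast i x hlen' hheadW' hlastW'
    have hsum : tw M 0 W = tw M 0 W.dropLast + tw M (0 + P.length) [x, j] := by
      rw [hPx, hWsplit]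
      exact tw_append_cons M x [j] P 0
    have htwxj : tw M (0 + P.length) [x, j] = M (k+1) x j := by
      rw [hPlen, Nat.zero_add, tw_cons_cons, tw_single, add_zero]
    rw [hsum, htwxj]
    have hle : tw M 0 W.dropLast + M (k+1) x j ≤ Gamma M k i x + M (k+1) x j :=
      add_le_add_left hih _
    exact hle.trans (le_iSup (fun t => Gamma M k i t + M (k+1) t j) x)

/-- joining maximal-weight initial and final walks by loops at node
`one` yields a full walk of weight `w_i* + v_j*`; hence `Γ(k)_{i,j} ≥ w_i* + v_j*`. -/
theorem rank_one_transient_statement15 {n : ℕ}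
    (𝒳 : Set (Fin (n + 2) → Fin (n + 2) → EReal))
    (Asup Ainf : Fin (n + 2) → Fin (n + 2) → EReal)
    (hstand : Standing 𝒳 Asup Ainf 0)
    (k : ℕ) (hk : 1 ≤ k)
    (A : ℕ → Fin (n + 2) → Fin (n + 2) → EReal)
    (hA : ∀ l, 1 ≤ l → l ≤ k → A l ∈ 𝒳)
    (i j : Fin (n + 2))
    -- a maximal-weight initial walk `W₁` and a maximal-weight final walk `W₂`
    (W₁ : List (Fin (n + 2)))
    (h1 : isInitialWalk A 0 k i W₁)
    (hw1 : tw A 0 W₁ = wStar A 0 k i)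
    (s : ℕ) (W₂ : List (Fin (n + 2)))
    (h2 : isFinalWalk A 0 k j s W₂)
    (hw2 : tw A s W₂ = vStar A 0 k j)
    -- whose lengths `l₁`, `l₂` satisfy `l₁ + l₂ ≤ k`
    (hlen : (W₁.length - 1) + (W₂.length - 1) ≤ k) :
    (∃ (c : ℕ) (Wf : List (Fin (n + 2))),
      Wf = W₁ ++ List.replicate c (0 : Fin (n + 2)) ++ W₂.tail ∧
      isFullWalk A k i j Wf ∧
      tw A 0 Wf = wStar A 0 k i + vStar A 0 k j) ∧
    wStar A 0 k i + vStar A 0 k j ≤ Gamma A k i j := by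
  obtain ⟨htw1, hl1, hhead1, hlast1, -⟩ := h1
  obtain ⟨htw2, hs2, hhead2, hlast2, -⟩ := h2
  obtain ⟨-, -, -, -, -, -, -, -, -, hone, -, -, -⟩ := hstand
  have hW1ne : W₁ ≠ [] := fun h => by rw [h] at hhead1; simp at hhead1
  have hW2ne : W₂ ≠ [] := fun h => by rw [h] at hhead2; simp at hhead2
  have hlenW1pos : 1 ≤ W₁.length := List.length_pos_iff.mpr hW1ne
  have hlenW2pos : 1 ≤ W₂.length := List.length_pos_iff.mpr hW2ne
  have hT : (0 : Fin (n+2)) :: W₂.tail = W₂ := List.cons_head?_tail hhead2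
  have hTlen : W₂.tail.length = W₂.length - 1 := List.length_tail
  set c := s - (W₁.length - 1) with hcdef
  have hc : W₁.length - 1 + c = s := by omega
  have hsk : s ≤ k := by omega
  have hgl : W₁.dropLast ++ [(0 : Fin (n+2))] = W₁ := by
    have h2 : W₁.getLast hW1ne = 0 := by
      rw [List.getLast?_eq_getLast hW1ne] at hlast1
      exact Option.some_injective _ hlast1
    rw [← h2]
    exact List.dropLast_append_getLast hW1ne
  have hPlen : W₁.dropLast.length = W₁.length - 1 := List.length_dropLast
  have hrc : List.replicate c (0 : Fin (n+2)) ++ [0] = 0 :: List.replicate c 0 := by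
    rw [← List.replicate_succ', List.replicate_succ]
  have hWf1 : W₁ ++ List.replicate c (0 : Fin (n+2)) ++ W₂.tail
      = W₁.dropLast ++ (0 : Fin (n+2)) :: (List.replicate c 0 ++ W₂.tail) := by
    conv_lhs => rw [← hgl]
    simp
  have hmid : (0 : Fin (n+2)) :: (List.replicate c 0 ++ W₂.tail)
      = List.replicate c (0 : Fin (n+2)) ++ (0 :: W₂.tail) := by
    rw [← List.cons_append, ← hrc]
    simp
  have hrep := tw_twalk_replicate A (0 : Fin (n+2)) c (W₁.length - 1)
    (fun l hl hl' => hone (A l) (hA l (by omega) (by omega)))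
  have hmidw : tw A (W₁.length - 1) ((0 : Fin (n+2)) :: (List.replicate c 0 ++ W₂.tail))
      = tw A s W₂ := by
    rw [hmid, tw_append_cons A 0 W₂.tail (List.replicate c 0) (W₁.length - 1),
      List.length_replicate, hc, hT, ← List.replicate_succ', hrep.1, zero_add]
  have hweight : tw A 0 (W₁ ++ List.replicate c (0 : Fin (n+2)) ++ W₂.tail)
      = wStar A 0 k i + vStar A 0 k j := by
    rw [hWf1, tw_append_cons A 0 (List.replicate c 0 ++ W₂.tail) W₁.dropLast 0,
      hgl, Nat.zero_add, hPlen, hmidw, hw1, hw2]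
  have hwalk : twalk A 0 (W₁ ++ List.replicate c (0 : Fin (n+2)) ++ W₂.tail) := by
    rw [hWf1, twalk_append_cons A 0 (List.replicate c 0 ++ W₂.tail) W₁.dropLast 0,
      hgl, Nat.zero_add, hPlen]
    refine ⟨htw1, ?_⟩
    rw [hmid, twalk_append_cons A 0 W₂.tail (List.replicate c 0) (W₁.length - 1),
      List.length_replicate, hc, hT, ← List.replicate_succ']
    exact ⟨hrep.2, htw2⟩
  have hlenWf : (W₁ ++ List.replicate c (0 : Fin (n+2)) ++ W₂.tail).length = k + 1 := by
    simp only [List.length_append, List.length_replicate]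
    omega
  have hheadWf : (W₁ ++ List.replicate c (0 : Fin (n+2)) ++ W₂.tail).head? = some i := by
    rw [List.append_assoc, List.head?_append_of_ne_nil W₁ hW1ne]
    exact hhead1
  have hWf2 : W₁ ++ List.replicate c (0 : Fin (n+2)) ++ W₂.tail
      = (W₁.dropLast ++ List.replicate c (0 : Fin (n+2))) ++ W₂ := by
    rw [hWf1, hmid, hT]
    simp [List.append_assoc]
  have hlastWf : (W₁ ++ List.replicate c (0 : Fin (n+2)) ++ W₂.tail).getLast? = some j := by
    rw [hWf2, List.getLast?_append_of_ne_nil _ hW2ne]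
    exact hlast2
  refine ⟨⟨c, _, rfl, ⟨hwalk, hlenWf, hheadWf, hlastWf⟩, hweight⟩, ?_⟩
  rw [← hweight]
  exact tw_le_Gamma A k _ i j hlenWf hheadWf hlastWf

end MaxPlusTransient
end
end

section
/- Under the standing assumptions, every walk on the trellis digraph 𝒯_{Γ(k)} from a node 1:s to a node 1:t (0 ≤ s ≤ t ≤ k) has weight at most 0, with equality if and only if every arc of the walk is a loop arc at node 1, i.e. an arc from 1:(l−1) to 1:l. -/
/-
Common framework for "A bound for the rank-one transient of inhomogeneous matrix
products in special case" (Kennedy-Cochran-Patrick, Sergeev, Berežný).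

We work over the max-plus semiring, modelled inside `EReal` (so `⊥ = -∞` is the
max-plus zero and ordinary addition is the max-plus multiplication).  Matrices are
functions `Fin m → Fin m → EReal`.  The distinguished node "1" of the paper is the
node `0 : Fin (n+2)` (so that `n + 2 ≥ 2` plays the role of the paper's `n ≥ 2`).

A walk is a nonempty list of nodes.  Walks on the trellis digraph of the product
`A 1 ⊗ ⋯ ⊗ A k` additionally record the level at which they start: the arc from the
`(l-1)`-st to the `l`-th node of a walk starting at level `s` has weight given by the
matrix `A (s + l)`.
-/

open scoped Classical

noncomputable section

namespace MaxPlusTransient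

variable {m : ℕ}

/-! ### Auxiliary lemmas -/

lemma tw_const (B : Fin m → Fin m → EReal) :
    ∀ (W : List (Fin m)) (s t : ℕ), tw (fun _ => B) s W = tw (fun _ => B) t W
  | [], _, _ => rfl
  | [_], _, _ => rfl
  | _ :: b :: u, s, t => by
      simp only [tw]
      rw [tw_const B (b :: u) (s + 1) (t + 1)]

lemma twalk_const' (B : Fin m → Fin m → EReal) :
    ∀ (W : List (Fin m)) (s t : ℕ), twalk (fun _ => B) s W → twalk (fun _ => B) t W
  | [], _, _, h => h
  | [_], _, _, _ => trivial
  | _ :: b :: u, s, t, h => ⟨h.1, twalk_const' B (b :: u) (s + 1) (t + 1) h.2⟩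

lemma tw_split (M : ℕ → Fin m → Fin m → EReal) :
    ∀ (C : List (Fin m)) (s : ℕ) (a b : Fin m) (t : List (Fin m)),
      tw M s (a :: (C ++ b :: t)) =
        tw M s (a :: (C ++ [b])) + tw M (s + C.length + 1) (b :: t)
  | [], s, a, b, t => by
      simp only [List.nil_append, List.length_nil, Nat.add_zero, tw, add_zero]
  | c :: C, s, a, b, t => by
      simp only [List.cons_append, tw, List.length_cons, List.append_eq]
      rw [tw_split M C (s + 1) c b t,
        show s + 1 + C.length + 1 = s + (C.length + 1) + 1 by omega, add_assoc]
      exact (add_assoc _ _ _).symm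

lemma twalk_split (M : ℕ → Fin m → Fin m → EReal) :
    ∀ (C : List (Fin m)) (s : ℕ) (a b : Fin m) (t : List (Fin m)),
      twalk M s (a :: (C ++ b :: t)) →
        twalk M s (a :: (C ++ [b])) ∧ twalk M (s + C.length + 1) (b :: t)
  | [], s, a, b, t, h => by
      simp only [List.nil_append] at h
      exact ⟨⟨h.1, trivial⟩, h.2⟩
  | c :: C, s, a, b, t, h => by
      simp only [List.cons_append] at h ⊢
      obtain ⟨h1, h2⟩ := h
      obtain ⟨h3, h4⟩ := twalk_split M C (s + 1) c b t h2
      refine ⟨⟨h1, h3⟩, ?_⟩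
      rw [show s + (c :: C).length + 1 = s + 1 + C.length + 1 by
        simp only [List.length_cons]; omega]
      exact h4

lemma tw_mono (M N : ℕ → Fin m → Fin m → EReal) :
    ∀ (W : List (Fin m)) (s : ℕ),
      (∀ l, s < l → l + 1 ≤ s + W.length → ∀ a b, M l a b ≤ N l a b) →
      tw M s W ≤ tw N s W
  | [], _, _ => le_refl _
  | [_], _, _ => le_refl _
  | a :: b :: t, s, h => by
      simp only [tw]
      refine add_le_add
        (h (s + 1) (by omega) (by simp only [List.length_cons]; omega) a b) ?_
      exact tw_mono M N (b :: t) (s + 1) (fun l hl1 hl2 =>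
        h l (by omega) (by simp only [List.length_cons] at hl2 ⊢; omega))

lemma twalk_mono (M N : ℕ → Fin m → Fin m → EReal) :
    ∀ (W : List (Fin m)) (s : ℕ),
      (∀ l, s < l → l + 1 ≤ s + W.length → ∀ a b, M l a b ≠ ⊥ → N l a b ≠ ⊥) →
      twalk M s W → twalk N s W
  | [], _, _, hw => hw
  | [_], _, _, _ => trivial
  | a :: b :: t, s, h, hw =>
      ⟨h (s + 1) (by omega) (by simp only [List.length_cons]; omega) a b hw.1,
        twalk_mono M N (b :: t) (s + 1) (fun l hl1 hl2 =>
          h l (by omega) (by simp only [List.length_cons] at hl2 ⊢; omega)) hw.2⟩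

lemma tw_zero (M : ℕ → Fin m → Fin m → EReal) (z : Fin m) :
    ∀ (W : List (Fin m)) (s : ℕ), (∀ v ∈ W, v = z) →
      (∀ l, s < l → l + 1 ≤ s + W.length → M l z z = 0) →
      tw M s W = 0
  | [], _, _, _ => rfl
  | [_], _, _, _ => rfl
  | a :: b :: t, s, hall, h => by
      have ha : a = z := hall a (by simp)
      have hb : b = z := hall b (by simp)
      have hrec : tw M (s + 1) (b :: t) = 0 :=
        tw_zero M z (b :: t) (s + 1)
          (fun v hv => hall v (List.mem_cons_of_mem a hv))
          (fun l h1 h2 => h l (by omega)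
            (by simp only [List.length_cons] at h2 ⊢; omega))
      have hM : M (s + 1) z z = 0 :=
        h (s + 1) (by omega) (by simp only [List.length_cons]; omega)
      simp only [tw]
      rw [hrec, add_zero, ha, hb]
      exact hM

lemma exists_split_at {α : Type*} (one : α) [DecidableEq α] :
    ∀ (L : List α), one ∈ L → ∃ u v, L = u ++ one :: v ∧ ∀ x ∈ u, x ≠ one
  | [], h => absurd h List.not_mem_nil
  | a :: t, h => by
      by_cases ha : a = one
      · exact ⟨[], t, by rw [ha, List.nil_append], by simp⟩
      · have hmem : one ∈ t := by
          rcases List.mem_cons.1 h with h' | h'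
          · exact absurd h'.symm ha
          · exact h'
        obtain ⟨u, v, h1, h2⟩ := exists_split_at one t hmem
        refine ⟨a :: u, v, by rw [List.cons_append, h1], ?_⟩
        intro x hx
        rcases List.mem_cons.1 hx with h' | h'
        · rw [h']; exact ha
        · exact h2 x h'

lemma core_walk (B : Fin m → Fin m → EReal) (one : Fin m) (hdiag : B one one = 0)
    (hcyc : ∀ W, isCycle B W → (∃ v ∈ W, v ≠ one) → wWeight B W < 0) :
    ∀ (N : ℕ) (W : List (Fin m)), W.length ≤ N → isWalk B W →
      W.head? = some one → W.getLast? = some one →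
      wWeight B W ≤ 0 ∧ ((∃ v ∈ W, v ≠ one) → wWeight B W < 0) := by
  intro N
  induction N with
  | zero =>
    intro W hN hw hh hl
    cases W with
    | nil => simp at hh
    | cons a t => simp at hN
  | succ N ih =>
    intro W hN hw hh hl
    match W with
    | [] => simp at hh
    | [a] =>
      have ha : one = a := by simpa using hh.symm
      subst ha
      refine ⟨le_of_eq rfl, ?_⟩
      rintro ⟨v, hv, hne⟩
      simp only [List.mem_singleton] at hv
      exact absurd hv hne
    | a :: b :: t =>
      have ha : one = a := by simpa using hh.symm
      subst ha
      by_cases hb : b = one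
      · have hb' : one = b := hb.symm
        subst hb'
        have hw2 : isWalk B (one :: t) := twalk_const' B (one :: t) 1 0 hw.2
        have hl2 : (one :: t).getLast? = some one := by
          rwa [List.getLast?_cons_cons] at hl
        obtain ⟨ih1, ih2⟩ := ih (one :: t)
          (by simp only [List.length_cons] at hN ⊢; omega) hw2 rfl hl2
        have hW : wWeight B (one :: one :: t) = wWeight B (one :: t) := by
          simp only [wWeight, tw]
          rw [hdiag, zero_add, tw_const B (one :: t) (0 + 1) 0]
        constructor
        · rw [hW]; exact ih1
        · rintro ⟨v, hv, hne⟩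
          rw [hW]
          apply ih2
          rcases List.mem_cons.1 hv with h' | h'
          · exact absurd h' hne
          · exact ⟨v, h', hne⟩
      · -- b ≠ one : split the walk at the first return to `one`
        have hl' : (b :: t).getLast? = some one := by
          rwa [List.getLast?_cons_cons] at hl
        have hmem : one ∈ b :: t := by
          obtain ⟨hne', heq⟩ := List.mem_getLast?_eq_getLast (Option.mem_def.2 hl')
          exact heq ▸ List.getLast_mem hne'
        obtain ⟨u, v, hsplit, hu⟩ := exists_split_at one (b :: t) hmem
        rw [hsplit] at hw hl
        obtain ⟨hwC, hwR⟩ := twalk_split (fun _ => B) u 0 one one v hw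
        have hC : isCycle B (one :: (u ++ [one])) := by
          refine ⟨hwC, ?_, ?_⟩
          · simp only [List.length_cons, List.length_append, List.length_singleton]
            omega
          · rw [show one :: (u ++ [one]) = (one :: u) ++ [one] from rfl,
              List.getLast?_append_cons]
            rfl
        have hbu : b ∈ u := by
          cases u with
          | nil =>
            simp only [List.nil_append, List.cons.injEq] at hsplit
            exact absurd hsplit.1 hb
          | cons b' u' =>
            simp only [List.cons_append, List.cons.injEq] at hsplit
            rw [hsplit.1]
            exact List.mem_cons_self
        have hcycw : wWeight B (one :: (u ++ [one])) < 0 :=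
          hcyc _ hC ⟨b, by simp [hbu], hb⟩
        have hwR' : isWalk B (one :: v) :=
          twalk_const' B (one :: v) (0 + u.length + 1) 0 hwR
        have hlR : (one :: v).getLast? = some one := by
          rw [show one :: (u ++ one :: v) = (one :: u) ++ one :: v from rfl,
            List.getLast?_append_cons] at hl
          exact hl
        have hlenR : (one :: v).length ≤ N := by
          have h1 : (b :: t).length = (u ++ one :: v).length := by rw [hsplit]
          simp only [List.length_cons, List.length_append] at h1 hN ⊢
          omega
        obtain ⟨ihR, -⟩ := ih (one :: v) hlenR hwR' rfl hlR
        have hlt : wWeight B (one :: b :: t) < 0 := by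
          rw [hsplit]
          have hwt : wWeight B (one :: (u ++ one :: v)) =
              wWeight B (one :: (u ++ [one])) + wWeight B (one :: v) := by
            simp only [wWeight]
            rw [tw_split (fun _ => B) u 0 one one v,
              tw_const B (one :: v) (0 + u.length + 1) 0]
          rw [hwt]
          calc wWeight B (one :: (u ++ [one])) + wWeight B (one :: v)
              ≤ wWeight B (one :: (u ++ [one])) + 0 := add_le_add_right ihR _
            _ = wWeight B (one :: (u ++ [one])) := add_zero _
            _ < 0 := hcycw
        exact ⟨le_of_lt hlt, fun _ => hlt⟩

/-- walks on the trellis from node `one` to node `one` have weight at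
most `0`, with equality iff all their arcs are loop arcs at node `one`. -/
theorem rank_one_transient_statement16 {n : ℕ}
    (𝒳 : Set (Fin (n + 2) → Fin (n + 2) → EReal))
    (Asup Ainf : Fin (n + 2) → Fin (n + 2) → EReal)
    (hstand : Standing 𝒳 Asup Ainf 0)
    (k : ℕ) (hk : 1 ≤ k)
    (A : ℕ → Fin (n + 2) → Fin (n + 2) → EReal)
    (hA : ∀ l, 1 ≤ l → l ≤ k → A l ∈ 𝒳) :
    ∀ (s : ℕ) (W : List (Fin (n + 2))),
      twalk A s W → s + (W.length - 1) ≤ k →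
      W.head? = some (0 : Fin (n + 2))  → W.getLast? = some (0 : Fin (n + 2)) →
      tw A s W ≤ 0 ∧ (tw A s W = 0 ↔ ∀ v ∈ W, v = (0 : Fin (n + 2))) := by
  intro s W hwalk hlen hhead hlast
  obtain ⟨hne, hnotop, hsup, hinf, hsuptop, hbot, hirr, hirrinf, hgeom, hdiagX,
    hcycX, hdiagsup, hcycsup⟩ := hstand
  cases W with
  | nil => simp at hhead
  | cons a t =>
    have hXmem : ∀ l, s < l → l + 1 ≤ s + (a :: t).length → A l ∈ 𝒳 := by
      intro l h1 h2
      apply hA l (by omega)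
      simp only [List.length_cons] at h2 hlen
      omega
    have hptle : ∀ l, s < l → l + 1 ≤ s + (a :: t).length →
        ∀ i j, A l i j ≤ Asup i j := by
      intro l h1 h2 i j
      rw [hsup]
      exact le_iSup₂ (f := fun X (_ : X ∈ 𝒳) => X i j) (A l) (hXmem l h1 h2)
    have hle : tw A s (a :: t) ≤ wWeight Asup (a :: t) := by
      have h1 := tw_mono A (fun _ => Asup) (a :: t) s hptle
      rwa [tw_const Asup (a :: t) s 0] at h1
    have hwsup : isWalk Asup (a :: t) := by
      apply twalk_const' Asup (a :: t) s 0
      refine twalk_mono A (fun _ => Asup) (a :: t) s ?_ hwalk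
      intro l h1 h2 i j hne' hbot'
      exact hne' (le_bot_iff.1 (hbot' ▸ hptle l h1 h2 i j))
    obtain ⟨h1, h2⟩ := core_walk Asup 0 hdiagsup hcycsup
      (a :: t).length (a :: t) le_rfl hwsup hhead hlast
    refine ⟨le_trans hle h1, ?_, ?_⟩
    · intro h0
      by_contra hcon
      push_neg at hcon
      obtain ⟨x, hx1, hx2⟩ := hcon
      have hlt := h2 ⟨x, hx1, hx2⟩
      exact absurd (lt_of_le_of_lt (h0 ▸ hle) hlt) (lt_irrefl 0)
    · intro hall
      exact tw_zero A 0 (a :: t) s hall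
        (fun l hl1 hl2 => hdiagX (A l) (hXmem l hl1 hl2))


end MaxPlusTransient
end
end
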